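/- arXiv:1703.06559 — 3 statements merged into one kernel-verified Lean document; each statement's English description precedes it below -/
import Mathlib

section
/- If a sequence of random vectors (T_n, D_n) in ℝ^d × ℝ^m converges in distribution to (Z_T, Z_D), A is an m' × m matrix and a_n → a in ℝ^{m'}, and the limiting law satisfies P(A Z_D ≤ a) > 0 with P(A Z_D = a coordinate-wise boundary) = 0 (the boundary of the polyhedron {A z ≤ a} has limiting probability zero), then the conditional laws of (T_n, D_n) given {A D_n ≤ a_n} converge weakly to the law of (Z_T, Z_D) given {A Z_D ≤ a}. -/
/-!
Weak convergence only controls integrals of bounded continuous functions, so the indicator of the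
moving polyhedron `{A z ≤ aₙ}` is squeezed between products of piecewise linear ramps in the
constraints, at a scale `ε` exceeding `‖aₙ - a‖`. Multiplying by `f` and taking the pointwise `min`
and `max` gives bounded continuous lower and upper bounds for `f · 1{A z ≤ aₙ}`, whatever the sign
of `f`. As `ε → 0` the ramps tend to the indicators of `{A z < a}` and `{A z ≤ a}`, which agree
`ν`-a.e. because the boundary is `ν`-null, so by dominated convergence both bounds have the limit
`∫_{A z ≤ a} f dν`. The denominators are the case `f = 1`, and `ν {A z ≤ a} > 0` allows passing
to the quotient.
-/

open MeasureTheory Filter Topology BoundedContinuousFunction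

noncomputable section

def cutoff (ε c t : ℝ) : ℝ := max 0 (min 1 ((c - t) / ε))

lemma cutoff_nonneg (ε c t : ℝ) : 0 ≤ cutoff ε c t := le_max_left _ _

lemma cutoff_le_one (ε c t : ℝ) : cutoff ε c t ≤ 1 := max_le zero_le_one (min_le_left _ _)

lemma continuous_cutoff (ε c : ℝ) : Continuous (cutoff ε c) := by
  unfold cutoff; fun_prop

lemma cutoff_eq_one {ε c t : ℝ} (hε : 0 < ε) (ht : t ≤ c - ε) : cutoff ε c t = 1 := by
  have : 1 ≤ (c - t) / ε := (le_div_iff₀ hε).2 (by linarith)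
  simp [cutoff, min_eq_left this]

lemma cutoff_eq_zero {ε c t : ℝ} (hε : 0 ≤ ε) (ht : c ≤ t) : cutoff ε c t = 0 := by
  have : (c - t) / ε ≤ 0 := div_nonpos_of_nonpos_of_nonneg (by linarith) hε
  simp [cutoff, min_le_of_right_le this]

lemma cutoff_le_ite_le {ε s t : ℝ} (hε : 0 < ε) (hs : |s| ≤ ε) :
    cutoff ε (-ε) t ≤ (if t ≤ s then 1 else 0) ∧
      (if t ≤ s then 1 else 0) ≤ cutoff ε (2 * ε) t := by
  obtain ⟨hs₁, hs₂⟩ := abs_le.1 hs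
  split_ifs with hts
  · exact ⟨cutoff_le_one _ _ _, (cutoff_eq_one hε (by linarith)).ge⟩
  · exact ⟨(cutoff_eq_zero hε.le (by linarith)).le, cutoff_nonneg _ _ _⟩

lemma tendsto_cutoff_neg (t : ℝ) :
    Tendsto (fun ε => cutoff ε (-ε) t) (𝓝[>] 0) (𝓝 (if t < 0 then 1 else 0)) := by
  refine tendsto_const_nhds.congr' ?_
  split_ifs with ht
  · filter_upwards [Ioo_mem_nhdsGT (show (0 : ℝ) < -t / 2 by linarith)] with ε hε
    exact (cutoff_eq_one hε.1 (by linarith [hε.2])).symm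
  · filter_upwards [self_mem_nhdsWithin] with ε (hε : 0 < ε)
    exact (cutoff_eq_zero hε.le (by linarith)).symm

lemma tendsto_cutoff_two_mul (t : ℝ) :
    Tendsto (fun ε => cutoff ε (2 * ε) t) (𝓝[>] 0) (𝓝 (if t ≤ 0 then 1 else 0)) := by
  refine tendsto_const_nhds.congr' ?_
  split_ifs with ht
  · filter_upwards [self_mem_nhdsWithin] with ε (hε : 0 < ε)
    exact (cutoff_eq_one hε (by linarith)).symm
  · filter_upwards [Ioo_mem_nhdsGT (show (0 : ℝ) < t / 2 by linarith)] with ε hε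
    exact (cutoff_eq_zero hε.1.le (by linarith [hε.2])).symm

lemma min_mul_le_mul_le_max {c l e h : ℝ} (hl : l ≤ e) (hh : e ≤ h) :
    min (c * l) (c * h) ≤ c * e ∧ c * e ≤ max (c * l) (c * h) := by
  rcases le_total 0 c with hc | hc
  · exact ⟨min_le_of_left_le (mul_le_mul_of_nonneg_left hl hc),
      le_max_of_le_right (mul_le_mul_of_nonneg_left hh hc)⟩
  · exact ⟨min_le_of_right_le (mul_le_mul_of_nonpos_left hh hc),
      le_max_of_le_left (mul_le_mul_of_nonpos_left hl hc)⟩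

section Polyhedron

variable {X : Type*} [TopologicalSpace X] {ι : Type*} [Fintype ι]

def polyhedronCutoff (L : C(X, ι → ℝ)) (a : ι → ℝ) (ε c : ℝ) : X →ᵇ ℝ :=
  .ofNormedAddCommGroup (fun x => ∏ i, cutoff ε c (L x i - a i))
    (continuous_finsetProd _ fun i _ =>
      (continuous_cutoff ε c).comp (((continuous_apply i).comp L.continuous).sub continuous_const))
    1 (fun x => by
      rw [Real.norm_of_nonneg (Finset.prod_nonneg fun i _ => cutoff_nonneg _ _ _)]
      exact Finset.prod_le_one (fun i _ => cutoff_nonneg _ _ _) fun i _ => cutoff_le_one _ _ _)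

variable {L : C(X, ι → ℝ)} {a : ι → ℝ}

lemma polyhedronCutoff_apply (ε c : ℝ) (x : X) :
    polyhedronCutoff L a ε c x = ∏ i, cutoff ε c (L x i - a i) := rfl

lemma abs_polyhedronCutoff_le_one (ε c : ℝ) (x : X) : |polyhedronCutoff L a ε c x| ≤ 1 := by
  rw [polyhedronCutoff_apply, abs_of_nonneg (Finset.prod_nonneg fun i _ => cutoff_nonneg _ _ _)]
  exact Finset.prod_le_one (fun i _ => cutoff_nonneg _ _ _) fun i _ => cutoff_le_one _ _ _

lemma polyhedronCutoff_le_indicator_le {ε : ℝ} (hε : 0 < ε) {b : ι → ℝ} (hb : ‖b - a‖ ≤ ε)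
    (x : X) :
    polyhedronCutoff L a ε (-ε) x ≤ {x | L x ≤ b}.indicator 1 x ∧
      {x | L x ≤ b}.indicator 1 x ≤ polyhedronCutoff L a ε (2 * ε) x := by
  classical
  have hind : {x | L x ≤ b}.indicator 1 x =
      ∏ i, if L x i - a i ≤ b i - a i then (1 : ℝ) else 0 := by
    simp [Set.indicator_apply, Finset.prod_boole, Pi.le_def]
  have h := fun i => cutoff_le_ite_le (t := L x i - a i) hε
    ((norm_le_pi_norm (b - a) i).trans hb)
  rw [hind, polyhedronCutoff_apply, polyhedronCutoff_apply]
  exact ⟨Finset.prod_le_prod (fun i _ => cutoff_nonneg _ _ _) fun i _ => (h i).1,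
    Finset.prod_le_prod (fun i _ => by positivity) fun i _ => (h i).2⟩

lemma tendsto_polyhedronCutoff_neg (x : X) :
    Tendsto (fun ε => polyhedronCutoff L a ε (-ε) x) (𝓝[>] 0)
      (𝓝 ({x | ∀ i, L x i < a i}.indicator 1 x)) := by
  classical
  have hind : {x | ∀ i, L x i < a i}.indicator 1 x =
      ∏ i, if L x i - a i < 0 then (1 : ℝ) else 0 := by
    simp [Set.indicator_apply, Finset.prod_boole]
  rw [hind]
  exact tendsto_finsetProd _ fun i _ => tendsto_cutoff_neg _

lemma tendsto_polyhedronCutoff_two_mul (x : X) :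
    Tendsto (fun ε => polyhedronCutoff L a ε (2 * ε) x) (𝓝[>] 0)
      (𝓝 ({x | L x ≤ a}.indicator 1 x)) := by
  classical
  have hind : {x | L x ≤ a}.indicator 1 x = ∏ i, if L x i - a i ≤ 0 then (1 : ℝ) else 0 := by
    simp [Set.indicator_apply, Finset.prod_boole, Pi.le_def]
  rw [hind]
  exact tendsto_finsetProd _ fun i _ => tendsto_cutoff_two_mul _

end Polyhedron

section WeakConvergence

variable {X : Type*} [TopologicalSpace X] [MeasurableSpace X]
  {β : Type*} {l : Filter β} {ρ : β → Measure X} {ν : Measure X}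

theorem tendsto_of_integral_squeeze {ι : Type*} {F : Filter ι} [F.NeBot]
    (hρ : ∀ g : X →ᵇ ℝ, Tendsto (fun n => ∫ x, g x ∂ρ n) l (𝓝 (∫ x, g x ∂ν)))
    {u : β → ℝ} {c : ℝ} {G H : ι → X →ᵇ ℝ}
    (hG : Tendsto (fun k => ∫ x, G k x ∂ν) F (𝓝 c))
    (hH : Tendsto (fun k => ∫ x, H k x ∂ν) F (𝓝 c))
    (hGH : ∀ᶠ k in F, ∀ᶠ n in l, ∫ x, G k x ∂ρ n ≤ u n ∧ u n ≤ ∫ x, H k x ∂ρ n) :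
    Tendsto u l (𝓝 c) := by
  refine tendsto_order.2 ⟨fun b hb => ?_, fun b hb => ?_⟩
  · obtain ⟨k, hbk, hk⟩ := ((hG.eventually (lt_mem_nhds hb)).and hGH).exists
    filter_upwards [(hρ (G k)).eventually (lt_mem_nhds hbk), hk] with n h₁ h₂
    exact h₁.trans_le h₂.1
  · obtain ⟨k, hbk, hk⟩ := ((hH.eventually (gt_mem_nhds hb)).and hGH).exists
    filter_upwards [(hρ (H k)).eventually (gt_mem_nhds hbk), hk] with n h₁ h₂
    exact h₂.2.trans_lt h₁

variable [OpensMeasurableSpace X]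

theorem tendsto_integral_of_ae_tendsto_indicator [IsFiniteMeasure ν] {ι : Type*} {F : Filter ι}
    [F.IsCountablyGenerated] {Φ : ι → X →ᵇ ℝ} {C : ℝ} (hΦ : ∀ k x, |Φ k x| ≤ C)
    {f : X → ℝ} {S : Set X} (hS : MeasurableSet S)
    (hlim : ∀ᵐ x ∂ν, Tendsto (fun k => Φ k x) F (𝓝 (S.indicator f x))) :
    Tendsto (fun k => ∫ x, Φ k x ∂ν) F (𝓝 (∫ x in S, f x ∂ν)) := by
  rw [← integral_indicator hS]
  exact tendsto_integral_filter_of_dominated_convergence (fun _ => C)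
    (.of_forall fun k => (Φ k).continuous.aestronglyMeasurable)
    (.of_forall fun k => ae_of_all _ (hΦ k)) (integrable_const C) hlim

theorem tendsto_setIntegral_of_cutoffs [IsFiniteMeasure ν] [∀ n, IsFiniteMeasure (ρ n)]
    (hρ : ∀ g : X →ᵇ ℝ, Tendsto (fun n => ∫ x, g x ∂ρ n) l (𝓝 (∫ x, g x ∂ν)))
    (f : X →ᵇ ℝ) {E : β → Set X} (hE : ∀ n, MeasurableSet (E n)) {S : Set X}
    (hS : MeasurableSet S) {ι : Type*} {F : Filter ι} [F.NeBot] [F.IsCountablyGenerated]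
    {lo hi : ι → X →ᵇ ℝ} (hlo : ∀ k x, |lo k x| ≤ 1) (hhi : ∀ k x, |hi k x| ≤ 1)
    (hlo_lim : ∀ᵐ x ∂ν, Tendsto (fun k => lo k x) F (𝓝 (S.indicator 1 x)))
    (hhi_lim : ∀ᵐ x ∂ν, Tendsto (fun k => hi k x) F (𝓝 (S.indicator 1 x)))
    (hbetween : ∀ᶠ k in F, ∀ᶠ n in l,
      ∀ x, lo k x ≤ (E n).indicator 1 x ∧ (E n).indicator 1 x ≤ hi k x) :
    Tendsto (fun n => ∫ x in E n, f x ∂ρ n) l (𝓝 (∫ x in S, f x ∂ν)) := by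
  have hind : ∀ (s : Set X) x, s.indicator f x = f x * s.indicator 1 x := fun s x => by
    rw [← Set.indicator_mul_right]; simp
  have hbound : ∀ k x, max |f x * lo k x| |f x * hi k x| ≤ ‖f‖ := fun k x => by
    simp only [abs_mul]
    exact max_le (mul_le_of_le_one_right (abs_nonneg _) (hlo k x) |>.trans (f.norm_coe_le_norm x))
      (mul_le_of_le_one_right (abs_nonneg _) (hhi k x) |>.trans (f.norm_coe_le_norm x))
  refine tendsto_of_integral_squeeze hρ (F := F) (G := fun k => (f * lo k) ⊓ (f * hi k))
    (H := fun k => (f * lo k) ⊔ (f * hi k)) ?_ ?_ ?_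
  · refine tendsto_integral_of_ae_tendsto_indicator
      (fun k x => abs_min_le_max_abs_abs.trans (hbound k x)) hS ?_
    filter_upwards [hlo_lim, hhi_lim] with x hl hh
    simpa [hind] using (hl.const_mul (f x)).min (hh.const_mul (f x))
  · refine tendsto_integral_of_ae_tendsto_indicator
      (fun k x => abs_max_le_max_abs_abs.trans (hbound k x)) hS ?_
    filter_upwards [hlo_lim, hhi_lim] with x hl hh
    simpa [hind] using (hl.const_mul (f x)).max (hh.const_mul (f x))
  · filter_upwards [hbetween] with k hk
    filter_upwards [hk] with n hn
    have hfE : Integrable ((E n).indicator f) (ρ n) := (f.integrable _).indicator (hE n)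
    rw [← integral_indicator (hE n)]
    exact ⟨integral_mono (((f * lo k) ⊓ (f * hi k)).integrable (ρ n)) hfE fun x => by
        simpa [hind] using (min_mul_le_mul_le_max (hn x).1 (hn x).2).1,
      integral_mono hfE (((f * lo k) ⊔ (f * hi k)).integrable (ρ n)) fun x => by
        simpa [hind] using (min_mul_le_mul_le_max (hn x).1 (hn x).2).2⟩

theorem tendsto_setIntegral_polyhedron [IsFiniteMeasure ν] [∀ n, IsFiniteMeasure (ρ n)]
    (hρ : ∀ g : X →ᵇ ℝ, Tendsto (fun n => ∫ x, g x ∂ρ n) l (𝓝 (∫ x, g x ∂ν)))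
    {ι : Type*} [Fintype ι] (L : C(X, ι → ℝ)) {b : β → ι → ℝ} {a : ι → ℝ}
    (hb : Tendsto b l (𝓝 a)) (hbdry : ν {x | L x ≤ a ∧ ∃ i, L x i = a i} = 0) (f : X →ᵇ ℝ) :
    Tendsto (fun n => ∫ x in {x | L x ≤ b n}, f x ∂ρ n) l (𝓝 (∫ x in {x | L x ≤ a}, f x ∂ν)) := by
  have hmeas : ∀ c, MeasurableSet {x | L x ≤ c} := fun c =>
    (isClosed_le L.continuous continuous_const).measurableSet
  have hinterior : {x | ∀ i, L x i < a i} =ᵐ[ν] {x | L x ≤ a} := by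
    refine ae_eq_set.2 ⟨measure_mono_null (fun x hx => ?_) measure_empty,
      measure_mono_null (fun x hx => ?_) hbdry⟩
    · exact hx.2 fun i => (hx.1 i).le
    · obtain ⟨hle, hlt⟩ := hx
      refine ⟨hle, ?_⟩
      by_contra! h
      exact hlt fun i => (hle i).lt_of_ne (h i)
  refine tendsto_setIntegral_of_cutoffs hρ f (fun n => hmeas (b n)) (hmeas a) (F := 𝓝[>] 0)
    (lo := fun ε => polyhedronCutoff L a ε (-ε)) (hi := fun ε => polyhedronCutoff L a ε (2 * ε))
    (fun _ _ => abs_polyhedronCutoff_le_one _ _ _) (fun _ _ => abs_polyhedronCutoff_le_one _ _ _)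
    ?_ (ae_of_all _ tendsto_polyhedronCutoff_two_mul) ?_
  · filter_upwards [indicator_ae_eq_of_ae_eq_set (f := (1 : X → ℝ)) hinterior] with x hx
    exact hx ▸ tendsto_polyhedronCutoff_neg x
  · filter_upwards [self_mem_nhdsWithin] with ε (hε : 0 < ε)
    filter_upwards [(tendsto_iff_norm_sub_tendsto_zero.1 hb).eventually (ge_mem_nhds hε)] with n hn
    exact polyhedronCutoff_le_indicator_le hε hn

end WeakConvergence

/-- Conditional weak convergence for affine selection events: if `(T n, D n)` converges in
distribution to a limit law `ν`, `a n → a`, the limiting polyhedron `{A z ≤ a}` has positive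
probability and its boundary has probability zero, then the conditional laws of `(T n, D n)`
given `{A (D n) ≤ a n}` converge weakly to `ν` conditioned on `{A z ≤ a}`. -/
theorem conditional_weak_convergence_affine
    {d m m' : ℕ}
    {Ω : ℕ → Type*} [∀ n, MeasurableSpace (Ω n)]
    (μ : ∀ n, Measure (Ω n)) [∀ n, IsProbabilityMeasure (μ n)]
    (T : ∀ n, Ω n → (Fin d → ℝ)) (D : ∀ n, Ω n → (Fin m → ℝ))
    (hmeas : ∀ n, Measurable fun ω => (T n ω, D n ω))
    (ν : Measure ((Fin d → ℝ) × (Fin m → ℝ))) [IsProbabilityMeasure ν]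
    (A : Matrix (Fin m') (Fin m) ℝ) (aseq : ℕ → (Fin m' → ℝ)) (a : Fin m' → ℝ)
    (ha : Tendsto aseq atTop (nhds a))
    (hweak : ∀ f : BoundedContinuousFunction ((Fin d → ℝ) × (Fin m → ℝ)) ℝ,
      Tendsto (fun n => ∫ ω, f (T n ω, D n ω) ∂(μ n)) atTop (nhds (∫ p, f p ∂ν)))
    (hpos : 0 < ν {p | A.mulVec p.2 ≤ a})
    (hboundary : ν {p | A.mulVec p.2 ≤ a ∧ ∃ i, A.mulVec p.2 i = a i} = 0) :
    ∀ f : BoundedContinuousFunction ((Fin d → ℝ) × (Fin m → ℝ)) ℝ,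
      Tendsto
        (fun n =>
          (∫ ω in {ω | A.mulVec (D n ω) ≤ aseq n}, f (T n ω, D n ω) ∂(μ n))
            / (μ n {ω | A.mulVec (D n ω) ≤ aseq n}).toReal)
        atTop
        (nhds ((∫ p in {p | A.mulVec p.2 ≤ a}, f p ∂ν) / (ν {p | A.mulVec p.2 ≤ a}).toReal)) := by
  intro f
  let L : C((Fin d → ℝ) × (Fin m → ℝ), Fin m' → ℝ) := ⟨fun p => A.mulVec p.2, by fun_prop⟩
  have hlaw : ∀ g : (Fin d → ℝ) × (Fin m → ℝ) →ᵇ ℝ, Tendsto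
      (fun n => ∫ p, g p ∂(μ n).map fun ω => (T n ω, D n ω)) atTop (𝓝 (∫ p, g p ∂ν)) :=
    fun g => by
      simpa only [integral_map (hmeas _).aemeasurable g.continuous.aestronglyMeasurable]
        using hweak g
  have hsel : ∀ g : (Fin d → ℝ) × (Fin m → ℝ) →ᵇ ℝ, Tendsto
      (fun n => ∫ ω in {ω | A.mulVec (D n ω) ≤ aseq n}, g (T n ω, D n ω) ∂μ n) atTop
      (𝓝 (∫ p in {p | A.mulVec p.2 ≤ a}, g p ∂ν)) := fun g => by
    have hclosed : ∀ n, MeasurableSet {p | L p ≤ aseq n} := fun n =>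
      (isClosed_le L.continuous continuous_const).measurableSet
    have h := tendsto_setIntegral_polyhedron hlaw L ha hboundary g
    simp only [setIntegral_map (hclosed _) g.continuous.aestronglyMeasurable
      (hmeas _).aemeasurable] at h
    exact h
  have hprob : Tendsto (fun n => (μ n {ω | A.mulVec (D n ω) ≤ aseq n}).toReal) atTop
      (𝓝 (ν {p | A.mulVec p.2 ≤ a}).toReal) := by
    simpa [Measure.real_def] using hsel 1
  exact (hsel f).div hprob (ENNReal.toReal_ne_zero.2 ⟨hpos.ne', measure_ne_top ν _⟩)
end
end

section
/- Projection onto the min-at-coordinate-1 cone: for z ∈ ℝ^L, the Euclidean projection x* of z onto the closed convex cone C = {x ∈ ℝ^L : x₁ ≤ x_j for all j} satisfies x*_j = max{x*₁, z_j} for j ≥ 2, where x*₁ minimizes the convex function h(t) = (t − z₁)² + Σ_{l=2}^L (t − z_l)² · 1{t ≥ z_l}; moreover the minimizer x*₁ equals the average of z₁ together with all z_l (l ≥ 2) satisfying z_l ≤ x*₁. -/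
/-!
Every coordinate `j ≠ i₀` enters the squared distance separately, subject only to
`x j ≥ x i₀`, so at the projection it equals `max (x i₀) (z j)`. Substituting these optimal
values turns the squared distance into the profiled function `h`, whose minimum over `t` is
therefore attained at `x i₀`. Near that minimizer `h` is bounded above by the quadratic
`∑ (t - z l)²` over `l = i₀` and the `l` with `z l ≤ x i₀`, with equality at `x i₀`; so
`x i₀` is a local minimum of that quadratic, i.e. the average of those `z l`.
-/

open Finset Filter Topology

def minCone {ι : Type*} (i₀ : ι) : Set (ι → ℝ) := {x | ∀ j, x i₀ ≤ x j}

def profiledPoint {ι : Type*} [DecidableEq ι] (i₀ : ι) (z : ι → ℝ) (t : ℝ) : ι → ℝ :=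
  Function.update (fun i => max t (z i)) i₀ t

noncomputable def profiledObjective {ι : Type*} [Fintype ι] [DecidableEq ι] (i₀ : ι) (z : ι → ℝ)
    (t : ℝ) : ℝ :=
  (t - z i₀) ^ 2 + ∑ l ∈ univ.erase i₀, if z l ≤ t then (t - z l) ^ 2 else 0

theorem sq_max_sub_self (t a : ℝ) :
    (max t a - a) ^ 2 = if a ≤ t then (t - a) ^ 2 else 0 := by
  split_ifs with h
  · rw [max_eq_left h]
  · rw [max_eq_right (not_le.1 h).le, sub_self, sq, zero_mul]

theorem eq_max_of_sq_sub_le {a b c : ℝ} (hab : a ≤ b) (h : (b - c) ^ 2 ≤ (max a c - c) ^ 2) :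
    b = max a c := by
  rcases le_total c a with hca | hac
  · rw [max_eq_left hca] at h ⊢
    nlinarith
  · rw [max_eq_right hac] at h ⊢
    nlinarith

theorem profiledPoint_mem_minCone {ι : Type*} [DecidableEq ι] (i₀ : ι) (z : ι → ℝ) (t : ℝ) :
    profiledPoint i₀ z t ∈ minCone i₀ := by
  intro j
  rcases eq_or_ne j i₀ with rfl | hj
  · rfl
  · simp [profiledPoint, hj]

theorem eq_sum_div_card_of_isLocalMin {ι : Type*} {s : Finset ι} (hs : s.Nonempty)
    {w : ι → ℝ} {t : ℝ} (h : IsLocalMin (fun u => ∑ l ∈ s, (u - w l) ^ 2) t) :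
    t = (∑ l ∈ s, w l) / #s := by
  have hderiv : HasDerivAt (fun u => ∑ l ∈ s, (u - w l) ^ 2) (∑ l ∈ s, 2 * (t - w l)) t :=
    HasDerivAt.fun_sum fun l _ => by
      simpa using ((hasDerivAt_id' t).sub_const (w l)).fun_pow 2
  have hcrit := h.hasDerivAt_eq_zero hderiv
  rw [← mul_sum, sum_sub_distrib, sum_const, nsmul_eq_mul] at hcrit
  rw [eq_div_iff (by exact_mod_cast hs.card_ne_zero)]
  linarith

theorem sum_sq_update_sub {ι : Type*} [Fintype ι] [DecidableEq ι] (x z : ι → ℝ) (j : ι) (a : ℝ) :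
    ∑ i, (Function.update x j a i - z i) ^ 2 =
      ∑ i, (x i - z i) ^ 2 - (x j - z j) ^ 2 + (a - z j) ^ 2 := by
  rw [← add_sum_erase _ _ (mem_univ j), ← add_sum_erase _ (fun i => (x i - z i) ^ 2) (mem_univ j),
    Function.update_self, sum_congr rfl fun i hi => by
      rw [Function.update_of_ne (ne_of_mem_erase hi)]]
  ring

theorem sum_sq_profiledPoint_sub {ι : Type*} [Fintype ι] [DecidableEq ι]
    (i₀ : ι) (z : ι → ℝ) (t : ℝ) :
    ∑ i, (profiledPoint i₀ z t i - z i) ^ 2 = profiledObjective i₀ z t := by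
  rw [← add_sum_erase _ _ (mem_univ i₀), profiledObjective, profiledPoint, Function.update_self]
  congr 1
  refine sum_congr rfl fun l hl => ?_
  rw [Function.update_of_ne (ne_of_mem_erase hl), sq_max_sub_self]

section

variable {ι : Type*} [Fintype ι] [DecidableEq ι] {i₀ : ι} {z x : ι → ℝ}

theorem apply_eq_max_of_isMinOn (hx : x ∈ minCone i₀)
    (hmin : IsMinOn (fun y => ∑ i, (y i - z i) ^ 2) (minCone i₀) x) {j : ι} (hj : j ≠ i₀) :
    x j = max (x i₀) (z j) := by
  have hmem : Function.update x j (max (x i₀) (z j)) ∈ minCone i₀ := by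
    intro i
    rw [Function.update_of_ne hj.symm]
    rcases eq_or_ne i j with rfl | hij
    · rw [Function.update_self]
      exact le_max_left _ _
    · rw [Function.update_of_ne hij]
      exact hx i
  have hle := isMinOn_iff.1 hmin _ hmem
  rw [sum_sq_update_sub] at hle
  exact eq_max_of_sq_sub_le (hx j) (by linarith)

theorem profiledPoint_eq_of_isMinOn (hx : x ∈ minCone i₀)
    (hmin : IsMinOn (fun y => ∑ i, (y i - z i) ^ 2) (minCone i₀) x) :
    profiledPoint i₀ z (x i₀) = x := by
  funext i
  rcases eq_or_ne i i₀ with rfl | hi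
  · simp [profiledPoint]
  · rw [profiledPoint, Function.update_of_ne hi, apply_eq_max_of_isMinOn hx hmin hi]

theorem profiledObjective_le_of_isMinOn (hx : x ∈ minCone i₀)
    (hmin : IsMinOn (fun y => ∑ i, (y i - z i) ^ 2) (minCone i₀) x) (t : ℝ) :
    profiledObjective i₀ z (x i₀) ≤ profiledObjective i₀ z t := by
  rw [← sum_sq_profiledPoint_sub, ← sum_sq_profiledPoint_sub, profiledPoint_eq_of_isMinOn hx hmin]
  exact isMinOn_iff.1 hmin _ (profiledPoint_mem_minCone i₀ z t)

end

theorem eq_avg_of_isLocalMin_profiledObjective {ι : Type*} [Fintype ι] [DecidableEq ι]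
    {i₀ : ι} {z : ι → ℝ} {t₀ : ℝ} (h : IsLocalMin (profiledObjective i₀ z) t₀) :
    t₀ = (z i₀ + ∑ l ∈ (univ.erase i₀).filter (fun l => z l ≤ t₀), z l)
      / (1 + ((univ.erase i₀).filter (fun l => z l ≤ t₀)).card) := by
  set S := (univ.erase i₀).filter (fun l => z l ≤ t₀)
  have hi₀ : i₀ ∉ S := by simp [S]
  set g := fun t => ∑ l ∈ insert i₀ S, (t - z l) ^ 2
  have hg (t : ℝ) : g t = (t - z i₀) ^ 2 + ∑ l ∈ (univ.erase i₀),
      if z l ≤ t₀ then (t - z l) ^ 2 else 0 := by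
    rw [← sum_filter]
    exact sum_insert hi₀
  have hnear : ∀ᶠ t in 𝓝 t₀, ∀ l, t₀ < z l → t < z l :=
    eventually_all.2 fun _ => eventually_imp_distrib_left.2 eventually_lt_nhds
  have hle : ∀ᶠ t in 𝓝 t₀, profiledObjective i₀ z t ≤ g t := by
    filter_upwards [hnear] with t ht
    rw [hg, profiledObjective]
    gcongr with l
    split_ifs with _ hl₀ hl₀
    · exact le_rfl
    · linarith [ht l (not_le.1 hl₀)]
    · positivity
    · exact le_rfl
  have hloc : IsLocalMin g t₀ := by
    filter_upwards [h, hle] with t h₁ h₂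
    rw [hg, ← profiledObjective]
    linarith
  have := eq_sum_div_card_of_isLocalMin (insert_nonempty i₀ S) hloc
  rwa [sum_insert hi₀, card_insert_of_notMem hi₀, Nat.cast_add_one, add_comm (#S : ℝ)] at this

/-- Euclidean projection onto the cone `{x : x₀ ≤ x_j ∀ j}` (minimum attained at the first
coordinate): the projection `x*` of `z` satisfies `x*_j = max(x*₀, z_j)` for `j ≠ 0`; its
first coordinate minimizes the profiled convex function
`h(t) = (t − z₀)² + ∑_{l ≠ 0} (t − z_l)² 1{t ≥ z_l}`; and `x*₀` equals the average of `z₀`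
together with all `z_l` (`l ≠ 0`) with `z_l ≤ x*₀`. -/
theorem projection_min_cone
    {L : ℕ} [NeZero L] (z xstar : Fin L → ℝ)
    (hmem : ∀ j, xstar 0 ≤ xstar j)
    (hproj : ∀ x : Fin L → ℝ, (∀ j, x 0 ≤ x j) →
      ∑ i, (xstar i - z i) ^ 2 ≤ ∑ i, (x i - z i) ^ 2)
    (h : ℝ → ℝ)
    (hdef : ∀ t, h t = (t - z 0) ^ 2 +
      ∑ l ∈ Finset.univ.erase (0 : Fin L), (if z l ≤ t then (t - z l) ^ 2 else 0)) :
    (∀ j : Fin L, j ≠ 0 → xstar j = max (xstar 0) (z j)) ∧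
    (∀ t : ℝ, h (xstar 0) ≤ h t) ∧
    (xstar 0 =
      (z 0 + ∑ l ∈ (Finset.univ.erase (0 : Fin L)).filter (fun l => z l ≤ xstar 0), z l)
        / (1 + ((Finset.univ.erase (0 : Fin L)).filter (fun l => z l ≤ xstar 0)).card)) := by
  have hx : xstar ∈ minCone 0 := hmem
  have hmin : IsMinOn (fun x => ∑ i, (x i - z i) ^ 2) (minCone 0) xstar :=
    isMinOn_iff.2 hproj
  obtain rfl : h = profiledObjective 0 z := funext hdef
  have hglobal := profiledObjective_le_of_isMinOn hx hmin
  exact ⟨fun _ hj => apply_eq_max_of_isMinOn hx hmin hj, hglobal,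
    eq_avg_of_isLocalMin_profiledObjective (Eventually.of_forall hglobal)⟩
end

section
/- Quadratic remainder bound: under the assumptions of the test-error theorem, (1/√n₂) ‖X^{test}(β₀ − β̂^{train})‖² → 0 in probability as n₁, n₂ → ∞ with n₂ = Θ(n₁). -/
/-!
By Cauchy–Schwarz, `(xᵢ ⬝ᵥ (β₀ − β̂))² ≤ ‖xᵢ‖² ‖β₀ − β̂‖²`, so with `n₂ ≤ C n₁` the quantity is at
most `√C · (n₂⁻¹ ∑ ‖xᵢ‖²) · √n₁ ‖β̂ − β₀‖²`. The sample mean of the `‖xᵢ‖²` has expectation `E‖x₁‖²`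
for every `n₂`, hence is bounded in probability by Markov's inequality, while the last factor tends
to zero in probability; and a product of such factors tends to zero in probability.
-/

open MeasureTheory ProbabilityTheory Filter Matrix Topology Finset

section InProbability

variable {Ω ι : Type*} [MeasurableSpace Ω]

/-- `U = O_P(1)`, stated through upper deviations only. -/
def BoundedInProbability (μ : Measure Ω) (U : ι → Ω → ℝ) : Prop :=
  ∀ δ > 0, ∃ K > 0, ∀ n, μ.real {ω | K ≤ U n ω} ≤ δ

/-- `V → 0` in probability, stated through upper deviations only (enough for nonnegative `V`). -/
def TendstoZeroInProbability (μ : Measure Ω) (l : Filter ι) (V : ι → Ω → ℝ) : Prop :=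
  ∀ ε > 0, Tendsto (fun n => μ.real {ω | ε ≤ V n ω}) l (𝓝 0)

variable {μ : Measure Ω}

theorem boundedInProbability_of_integral_le {U : ι → Ω → ℝ} {M : ℝ} (hU : ∀ n, 0 ≤ U n)
    (hint : ∀ n, Integrable (U n) μ) (hM : ∀ n, ∫ ω, U n ω ∂μ ≤ M) :
    BoundedInProbability μ U := by
  intro δ hδ
  refine ⟨(|M| + 1) / δ, by positivity, fun n => ?_⟩
  have markov := mul_meas_ge_le_integral_of_nonneg (Eventually.of_forall (hU n)) (hint n)
    ((|M| + 1) / δ)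
  rw [div_mul_eq_mul_div, div_le_iff₀ hδ] at markov
  by_contra! hlarge
  nlinarith [mul_le_mul_of_nonneg_right (hM n) hδ.le,
    mul_le_mul_of_nonneg_right (le_abs_self M) hδ.le,
    mul_lt_mul_of_pos_left hlarge (by positivity : (0 : ℝ) < |M| + 1)]

theorem BoundedInProbability.tendstoZeroInProbability_of_le_mul [IsFiniteMeasure μ]
    {l : Filter ι} {U V Z : ι → Ω → ℝ} (hU : BoundedInProbability μ U)
    (hV : TendstoZeroInProbability μ l V) (hV₀ : ∀ n ω, 0 ≤ V n ω)
    (hZ : ∀ n ω, Z n ω ≤ U n ω * V n ω) :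
    TendstoZeroInProbability μ l Z := by
  intro ε hε
  rw [Metric.tendsto_nhds]
  intro δ hδ
  obtain ⟨K, hK, hUK⟩ := hU (δ / 2) (half_pos hδ)
  have hVsmall : ∀ᶠ n in l, μ.real {ω | ε / K ≤ V n ω} < δ / 2 :=
    (hV (ε / K) (div_pos hε hK)).eventually (gt_mem_nhds (half_pos hδ))
  filter_upwards [hVsmall] with n hn
  have hsub : {ω | ε ≤ Z n ω} ⊆ {ω | K ≤ U n ω} ∪ {ω | ε / K ≤ V n ω} := by
    intro ω hω
    by_contra hout
    simp only [Set.mem_union, Set.mem_ofPred_eq, not_or, not_le] at hω hout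
    have : U n ω * V n ω < ε :=
      calc U n ω * V n ω ≤ K * V n ω := mul_le_mul_of_nonneg_right hout.1.le (hV₀ n ω)
        _ < K * (ε / K) := mul_lt_mul_of_pos_left hout.2 hK
        _ = ε := mul_div_cancel₀ ε hK.ne'
    linarith [hZ n ω]
  rw [Real.dist_0_eq_abs, abs_of_nonneg measureReal_nonneg]
  calc μ.real {ω | ε ≤ Z n ω}
      ≤ μ.real ({ω | K ≤ U n ω} ∪ {ω | ε / K ≤ V n ω}) := measureReal_mono hsub
    _ ≤ μ.real {ω | K ≤ U n ω} + μ.real {ω | ε / K ≤ V n ω} := measureReal_union_le _ _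
    _ < δ := by linarith [hUK n]

theorem integral_sum_range_div_le {X : ℕ → Ω → ℝ} (hint : ∀ i, Integrable (X i) μ)
    (hmean : ∀ i, ∫ ω, X i ω ∂μ = ∫ ω, X 0 ω ∂μ) (hmean₀ : 0 ≤ ∫ ω, X 0 ω ∂μ) (m : ℕ) :
    ∫ ω, (∑ i ∈ range m, X i ω) / m ∂μ ≤ ∫ ω, X 0 ω ∂μ := by
  rw [integral_div, integral_finsetSum _ fun i _ => hint i]
  simp only [hmean, sum_const, card_range, nsmul_eq_mul]
  rcases m.eq_zero_or_pos with rfl | hm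
  · simpa using hmean₀
  · rw [mul_div_cancel_left₀ _ (Nat.cast_pos.mpr hm).ne']

end InProbability

theorem one_div_sqrt_mul_sum_sq_dotProduct_le {n : Type*} [Fintype n] {C : ℝ} {m k : ℕ}
    (hmk : (m : ℝ) ≤ C * k) (x : ℕ → n → ℝ) (v : n → ℝ) :
    1 / √m * ∑ i ∈ range m, (x i ⬝ᵥ v) ^ 2 ≤
      √C * ((∑ i ∈ range m, ∑ j, x i j ^ 2) / m) * (√k * ∑ j, v j ^ 2) := by
  set A := ∑ i ∈ range m, ∑ j, x i j ^ 2
  set W := ∑ j, v j ^ 2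
  have hA : 0 ≤ A := sum_nonneg fun i _ => sum_nonneg fun j _ => sq_nonneg _
  have hW : 0 ≤ W := sum_nonneg fun j _ => sq_nonneg _
  have hCS : ∑ i ∈ range m, (x i ⬝ᵥ v) ^ 2 ≤ A * W := by
    rw [sum_mul]
    exact sum_le_sum fun i _ => sum_mul_sq_le_sq_mul_sq univ (x i) v
  have hsqrt : √m ≤ √C * √k := by
    rw [← Real.sqrt_mul' _ k.cast_nonneg]
    exact Real.sqrt_le_sqrt hmk
  have hmean : 1 / √m * A = √m * (A / m) := by
    rcases m.eq_zero_or_pos with rfl | hm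
    · simp
    · field_simp
      rw [Real.sq_sqrt m.cast_nonneg]
      ring
  calc 1 / √m * ∑ i ∈ range m, (x i ⬝ᵥ v) ^ 2
      ≤ 1 / √m * (A * W) := by gcongr
    _ = √m * (A / m) * W := by rw [← mul_assoc, hmean]
    _ ≤ √C * √k * (A / m) * W := by gcongr
    _ = √C * (A / m) * (√k * W) := by ring

theorem test_error_quadratic_remainder_bound_general
    {p : ℕ} {Ω : Type*} [MeasurableSpace Ω] (μ : Measure Ω) [IsProbabilityMeasure μ]
    (x : ℕ → Ω → (Fin p → ℝ)) (y : ℕ → Ω → ℝ)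
    (hident : ∀ i : ℕ, IdentDistrib (fun ω => (x i ω, y i ω)) (fun ω => (x 0 ω, y 0 ω)) μ μ)
    (β₀ : Fin p → ℝ)
    -- E‖x₁‖² < ∞
    (hmom : Integrable (fun ω => ∑ j, (x 0 ω j) ^ 2) μ)
    (n₁ n₂ : ℕ → ℕ)
    -- n₂ = Θ(n₁)
    (hTheta : ∃ c C : ℝ, 0 < c ∧ 0 < C ∧ ∀ n,
      c * (n₁ n : ℝ) ≤ (n₂ n : ℝ) ∧ (n₂ n : ℝ) ≤ C * (n₁ n : ℝ))
    (βhat : ℕ → Ω → (Fin p → ℝ))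
    -- rate-n₁^{1/4} consistency: √n₁ ‖β̂ₙ − β₀‖² → 0 in probability
    (hconsist : ∀ ε > 0, Tendsto
      (fun n => (μ {ω | ε ≤ Real.sqrt (n₁ n) * ∑ j, (βhat n ω j - β₀ j) ^ 2}).toReal)
      atTop (nhds 0)) :
    ∀ ε > 0, Tendsto
      (fun n => (μ {ω | ε ≤ (1 / Real.sqrt (n₂ n)) *
        ∑ i ∈ Finset.range (n₂ n), (x i ω ⬝ᵥ (β₀ - βhat n ω)) ^ 2}).toReal)
      atTop (nhds 0) := by
  obtain ⟨_, C, -, -, hC⟩ := hTheta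
  set X : ℕ → Ω → ℝ := fun i ω => ∑ j, x i ω j ^ 2
  have hXident (i : ℕ) : IdentDistrib (X i) (X 0) μ μ :=
    (hident i).comp (u := fun q : (Fin p → ℝ) × ℝ => ∑ j, q.1 j ^ 2) (by fun_prop)
  have hXint (i : ℕ) : Integrable (X i) μ := (hXident i).integrable_iff.mpr hmom
  have hbounded : BoundedInProbability μ
      (fun n ω => √C * ((∑ i ∈ range (n₂ n), X i ω) / n₂ n)) := by
    refine boundedInProbability_of_integral_le (M := √C * ∫ ω, X 0 ω ∂μ)
      (fun n ω => by positivity) (fun n => ?_) (fun n => ?_)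
    · exact ((integrable_finsetSum _ fun i _ => hXint i).div_const _).const_mul _
    · rw [integral_const_mul]
      have hmean := integral_sum_range_div_le hXint (fun i => (hXident i).integral_eq)
        (integral_nonneg fun ω => by positivity) (n₂ n)
      exact mul_le_mul_of_nonneg_left hmean (Real.sqrt_nonneg C)
  refine hbounded.tendstoZeroInProbability_of_le_mul hconsist (fun n ω => by positivity)
    fun n ω => ?_
  simpa only [Pi.sub_apply, sub_sq_comm (β₀ _)] using
    one_div_sqrt_mul_sum_sq_dotProduct_le (hC n).2 (fun i => x i ω) (β₀ - βhat n ω)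

/-- Quadratic remainder bound (step 3 in the proof of the test-error CLT): for i.i.d. data
with `E‖x₁‖² < ∞` and a training-based estimator with `√n₁ ‖β̂ₙ − β₀‖² → 0` in probability,
`n₂⁻¹ᐟ² ‖X^{test}(β₀ − β̂ₙ)‖² → 0` in probability as `n₁, n₂ → ∞` with `n₂ = Θ(n₁)`. -/
theorem test_error_quadratic_remainder_bound
    {p : ℕ} {Ω : Type*} [MeasurableSpace Ω] (μ : Measure Ω) [IsProbabilityMeasure μ]
    (x : ℕ → Ω → (Fin p → ℝ)) (y : ℕ → Ω → ℝ)
    (hxmeas : ∀ i, Measurable (x i)) (hymeas : ∀ i, Measurable (y i))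
    (hindep : iIndepFun (fun i ω => (x i ω, y i ω)) μ)
    (hident : ∀ i : ℕ, IdentDistrib (fun ω => (x i ω, y i ω)) (fun ω => (x 0 ω, y 0 ω)) μ μ)
    (β₀ : Fin p → ℝ)
    -- E‖x₁‖² < ∞
    (hmom : Integrable (fun ω => ∑ j, (x 0 ω j) ^ 2) μ)
    (n₁ n₂ : ℕ → ℕ) (hn₁ : Tendsto n₁ atTop atTop)
    -- n₂ = Θ(n₁)
    (hTheta : ∃ c C : ℝ, 0 < c ∧ 0 < C ∧ ∀ n,
      c * (n₁ n : ℝ) ≤ (n₂ n : ℝ) ∧ (n₂ n : ℝ) ≤ C * (n₁ n : ℝ))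
    (βhat : ℕ → Ω → (Fin p → ℝ)) (hβhatmeas : ∀ n, Measurable (βhat n))
    (hindep_train : ∀ n, IndepFun (βhat n)
      (fun ω => fun i : Fin (n₂ n) => (x i ω, y i ω)) μ)
    -- rate-n₁^{1/4} consistency: √n₁ ‖β̂ₙ − β₀‖² → 0 in probability
    (hconsist : ∀ ε > 0, Tendsto
      (fun n => (μ {ω | ε ≤ Real.sqrt (n₁ n) * ∑ j, (βhat n ω j - β₀ j) ^ 2}).toReal)
      atTop (nhds 0)) :
    ∀ ε > 0, Tendsto
      (fun n => (μ {ω | ε ≤ (1 / Real.sqrt (n₂ n)) *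
        ∑ i ∈ Finset.range (n₂ n), (x i ω ⬝ᵥ (β₀ - βhat n ω)) ^ 2}).toReal)
      atTop (nhds 0) :=
  test_error_quadratic_remainder_bound_general μ x y hident β₀ hmom n₁ n₂ hTheta βhat hconsist
end
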